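/- Let U_d ∈ ℝ^{n×d}, b ∈ ℝⁿ, H_d ∈ ℂ^{d×d} and r ∈ ℂ^d, and assume H_d + r e_d^T is diagonalizable: H_d + r e_d^T = X Λ X^{-1}, Λ = diag(λ₁,…,λ_d), with α_i = e_d^T X e_i, β_i = e_i^T X^{-1} e₁. Then for every polynomial p ∈ ℂ[X], the sketched approximation f_d^sk := U_d p(H_d + r e_d^T) e₁ ‖b‖ and the truncated approximation f_d^tr := U_d p(H_d) e₁ ‖b‖ satisfy f_d^sk − f_d^tr = U_d (Σ_{i=1}^d α_i β_i · p[H_d, λ_i]) r · ‖b‖. -/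

import Mathlib

/-!
Write `A = H + r e_dᵀ` and `q_λ = p[·, λ]`, so that `p = p(λ) + q_λ · (X - λ)`. If `A x = λ x`
then `p(A) x = p(λ) x` while `p(H) x = p(λ) x + q_λ(H) (H - λ) x = p(λ) x - q_λ(H) (A - H) x`,
hence `p(A) x - p(H) x = q_λ(H) (A - H) x = (e_dᵀ x) q_λ(H) r`. Expanding `e₁ = ∑ β_i X e_i`
in the eigenbasis given by the columns of `X` and summing gives the formula.
-/

open Matrix

/-- Euclidean norm of a vector in `ℝ^m`. -/
noncomputable def eunorm {m : ℕ} (v : Fin m → ℝ) : ℝ := Real.sqrt (∑ i, (v i) ^ 2)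

/-- The first-order divided-difference polynomial `p[·, λ] = (p - p(λ)) / (X - λ)`
(exact division in `ℂ[X]`). -/
noncomputable def divDiffPoly (p : Polynomial ℂ) (lam : ℂ) : Polynomial ℂ :=
  (p - Polynomial.C (p.eval lam)) / (Polynomial.X - Polynomial.C lam)

open Polynomial

section

variable {m R : Type*} [Fintype m] [DecidableEq m] [CommRing R]

theorem aeval_mulVec_of_mulVec_eq_smul {A : Matrix m m R}
    {x : m → R} {μ : R} (hx : A *ᵥ x = μ • x) (p : R[X]) :
    aeval A p *ᵥ x = p.eval μ • x := by
  induction p using Polynomial.induction_on with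
  | C a => simp [Algebra.algebraMap_eq_smul_one, smul_mulVec]
  | add p q hp hq => simp [add_mulVec, add_smul, hp, hq]
  | monomial n a ih =>
    rw [pow_succ, ← mul_assoc, map_mul, aeval_X, ← mulVec_mulVec, hx, mulVec_smul, ih,
      smul_smul, eval_mul_X, mul_comm]

theorem mulVec_col_of_eq_conj_diagonal {A X : Matrix m m R}
    {Λ : m → R} (hX : IsUnit X.det) (hA : A = X * diagonal Λ * X⁻¹) (i : m) :
    A *ᵥ X.col i = Λ i • X.col i := by
  calc A *ᵥ X.col i = (A * X) *ᵥ Pi.single i 1 := by rw [← mulVec_mulVec, mulVec_single_one]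
    _ = X *ᵥ (diagonal Λ).col i := by
      rw [hA, nonsing_inv_mul_cancel_right _ _ hX, ← mulVec_mulVec, mulVec_single_one]
    _ = Λ i • X.col i := by rw [col_diagonal, mulVec_single, op_smul_eq_smul]

theorem eq_sum_smul_col_of_isUnit_det {X : Matrix m m R}
    (hX : IsUnit X.det) (v : m → R) :
    v = ∑ i, (X⁻¹ *ᵥ v) i • X.col i := by
  conv_lhs => rw [← one_mulVec v, ← mul_nonsing_inv X hX, ← mulVec_mulVec, mulVec_eq_sum]
  simp only [op_smul_eq_smul]
  rfl

theorem divDiffPoly_mul_X_sub_C (p : ℂ[X]) (μ : ℂ) :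
    divDiffPoly p μ * (X - C μ) = p - C (p.eval μ) :=
  (mul_comm _ _).trans (EuclideanDomain.mul_div_cancel' (X_sub_C_ne_zero μ) X_sub_C_dvd_sub_C_eval)

theorem aeval_sub_aeval_mulVec_of_mulVec_eq_smul {A H : Matrix m m ℂ} {x : m → ℂ} {μ : ℂ}
    (hx : A *ᵥ x = μ • x) (p : ℂ[X]) :
    (aeval A p - aeval H p) *ᵥ x = aeval H (divDiffPoly p μ) *ᵥ ((A - H) *ᵥ x) := by
  have hp : aeval H p =
      algebraMap ℂ _ (p.eval μ) + aeval H (divDiffPoly p μ) * (H - algebraMap ℂ _ μ) := by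
    have h := congrArg (aeval H) (divDiffPoly_mul_X_sub_C p μ)
    rw [map_mul, map_sub, map_sub, aeval_X, aeval_C, aeval_C] at h
    exact sub_eq_iff_eq_add'.mp h.symm
  rw [sub_mulVec, aeval_mulVec_of_mulVec_eq_smul hx, hp, add_mulVec, ← mulVec_mulVec,
    sub_mulVec, sub_mulVec, hx]
  simp only [Algebra.algebraMap_eq_smul_one, smul_mulVec, one_mulVec, sub_add_cancel_left]
  rw [← mulVec_neg, neg_sub]

theorem aeval_sub_aeval_mulVec_eq_sum {A H X : Matrix m m ℂ} {Λ : m → ℂ} (hX : IsUnit X.det)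
    (hA : A = X * diagonal Λ * X⁻¹) (p : ℂ[X]) (v : m → ℂ) :
    (aeval A p - aeval H p) *ᵥ v =
      ∑ i, (X⁻¹ *ᵥ v) i • aeval H (divDiffPoly p (Λ i)) *ᵥ ((A - H) *ᵥ X.col i) := by
  conv_lhs => rw [eq_sum_smul_col_of_isUnit_det hX v]
  simp only [mulVec_sum, mulVec_smul,
    aeval_sub_aeval_mulVec_of_mulVec_eq_smul (mulVec_col_of_eq_conj_diagonal hX hA _)]

theorem aeval_add_vecMulVec_sub_aeval_mulVec {H X : Matrix m m ℂ} {r e Λ : m → ℂ}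
    (hX : IsUnit X.det) (hA : H + vecMulVec r e = X * diagonal Λ * X⁻¹) (p : ℂ[X]) (v : m → ℂ) :
    (aeval (H + vecMulVec r e) p - aeval H p) *ᵥ v =
      (∑ i, ((e ⬝ᵥ X.col i) * (X⁻¹ *ᵥ v) i) • aeval H (divDiffPoly p (Λ i))) *ᵥ r := by
  rw [aeval_sub_aeval_mulVec_eq_sum hX hA, add_sub_cancel_left, sum_mulVec]
  simp only [vecMulVec_mulVec, op_smul_eq_smul, mulVec_smul, smul_mulVec, smul_smul, mul_comm]

end

/-- **Corollary 6.3 (polynomial version): sketched vs. truncated approximation.**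
If `H + r e_dᵀ = X Λ X⁻¹` is diagonalizable with `α_i = e_dᵀ X e_i`,
`β_i = e_iᵀ X⁻¹ e₁`, then
`U p(H + r e_dᵀ) e₁ ‖b‖ - U p(H) e₁ ‖b‖ = U (∑ i α_i β_i p[H, λ_i]) r ‖b‖`.
(The paper's `d` is `d+1` here.) -/
theorem sketched_minus_truncated
    {n d : ℕ}
    (U : Matrix (Fin n) (Fin (d + 1)) ℝ) (b : Fin n → ℝ)
    (H : Matrix (Fin (d + 1)) (Fin (d + 1)) ℂ) (r : Fin (d + 1) → ℂ)
    (Xe : Matrix (Fin (d + 1)) (Fin (d + 1)) ℂ) (Λ : Fin (d + 1) → ℂ)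
    (hXe : IsUnit Xe.det)
    (hdiag : H + vecMulVec r (Pi.single (Fin.last d) 1 : Fin (d + 1) → ℂ)
      = Xe * diagonal Λ * Xe⁻¹)
    (p : Polynomial ℂ) :
    eunorm b • ((U.map Complex.ofReal).mulVec
        ((Polynomial.aeval
            (H + vecMulVec r (Pi.single (Fin.last d) 1 : Fin (d + 1) → ℂ)) p).mulVec
          (Pi.single 0 1 : Fin (d + 1) → ℂ)))
      - eunorm b • ((U.map Complex.ofReal).mulVec
        ((Polynomial.aeval H p).mulVec (Pi.single 0 1 : Fin (d + 1) → ℂ)))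
    = eunorm b • ((U.map Complex.ofReal).mulVec
        ((∑ i, (Xe (Fin.last d) i * Xe⁻¹ i 0) •
            Polynomial.aeval H (divDiffPoly p (Λ i))).mulVec r)) := by
  rw [← smul_sub, ← mulVec_sub, ← sub_mulVec, aeval_add_vecMulVec_sub_aeval_mulVec hXe hdiag]
  simp only [single_one_dotProduct, mulVec_single_one]
  rfl
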